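/- The fixed point f of the conformation process satisfies min_j x_j ≤ f_i ≤ max_j x_j for every node i; that is, conformed profiles lie within the range of the latent profiles. -/

import Mathlib

open Finset

/-!
A maximum principle: at a node where `f` is largest, `f` is a weighted average of `x` there and of
neighbouring values of `f` that are no larger, so the latent value there is at least the maximum of
`f`. Applied to `-x` and `-f`, the same argument bounds `f` from below.
-/

section MaximumPrinciple

variable {K : Type*} [Field K] [LinearOrder K] [IsStrictOrderedRing K]

lemma le_of_eq_average_of_forall_le {ι : Type*} (s : Finset ι) {a b : K} {c : ι → K}
    (hc : ∀ j ∈ s, c j ≤ a) (ha : a = (b + ∑ j ∈ s, c j) / (1 + #s)) : a ≤ b := by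
  have hpos : (0 : K) < 1 + #s := by positivity
  have hsum : ∑ j ∈ s, c j ≤ #s * a := by
    simpa only [sum_const, nsmul_eq_mul] using sum_le_sum hc
  rw [eq_div_iff hpos.ne'] at ha
  linarith

variable {V : Type*} [Fintype V] [Nonempty V]

lemma exists_forall_le_of_eq_average (N : V → Finset V) {x f : V → K}
    (hf : ∀ i, f i = (x i + ∑ j ∈ N i, f j) / (1 + #(N i))) : ∃ k, ∀ i, f i ≤ x k := by
  obtain ⟨k, -, hk⟩ := exists_max_image univ f univ_nonempty
  exact ⟨k, fun i => (hk i (mem_univ i)).trans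
    (le_of_eq_average_of_forall_le _ (fun j _ => hk j (mem_univ j)) (hf k))⟩

lemma exists_forall_ge_of_eq_average (N : V → Finset V) {x f : V → K}
    (hf : ∀ i, f i = (x i + ∑ j ∈ N i, f j) / (1 + #(N i))) : ∃ k, ∀ i, x k ≤ f i := by
  have hneg : ∀ i, (-f) i = ((-x) i + ∑ j ∈ N i, (-f) j) / (1 + #(N i)) := fun i => by
    simp only [Pi.neg_apply, sum_neg_distrib, hf i]
    ring
  obtain ⟨k, hk⟩ := exists_forall_le_of_eq_average N hneg
  exact ⟨k, fun i => neg_le_neg_iff.mp (hk i)⟩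

end MaximumPrinciple

theorem conformed_profiles_within_latent_range_general
    {V : Type*} [Fintype V] [Nonempty V]
    (G : SimpleGraph V) [DecidableRel G.Adj]
    (x f : V → ℝ)
    (hf : ∀ i, f i = (x i + ∑ j ∈ G.neighborFinset i, f j) / (1 + (G.degree i : ℝ))) :
    ∀ i, Finset.univ.inf' Finset.univ_nonempty x ≤ f i
      ∧ f i ≤ Finset.univ.sup' Finset.univ_nonempty x := by
  simp only [← G.card_neighborFinset_eq_degree] at hf
  obtain ⟨kmin, hmin⟩ := exists_forall_ge_of_eq_average (fun i => G.neighborFinset i) hf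
  obtain ⟨kmax, hmax⟩ := exists_forall_le_of_eq_average (fun i => G.neighborFinset i) hf
  exact fun i => ⟨(inf'_le x (mem_univ kmin)).trans (hmin i),
    (hmax i).trans (le_sup' x (mem_univ kmax))⟩

theorem conformed_profiles_within_latent_range
    {V : Type*} [Fintype V] [DecidableEq V] [Nonempty V]
    (G : SimpleGraph V) [DecidableRel G.Adj]
    (x f : V → ℝ)
    (hf : ∀ i, f i = (x i + ∑ j ∈ G.neighborFinset i, f j) / (1 + (G.degree i : ℝ))) :
    ∀ i, Finset.univ.inf' Finset.univ_nonempty x ≤ f i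
      ∧ f i ≤ Finset.univ.sup' Finset.univ_nonempty x :=
  conformed_profiles_within_latent_range_general G x f hf
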